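/- Let X ⊆ M be compact with conv(X) compact and all barycenters existing, and suppose at least one variance-maximizing probability measure μ ∈ P(X) has a unique barycenter. Then the circumradius of X in M equals the circumradius of i(X) = {δ_x : x ∈ X} in the Wasserstein space (P(M), W₂). -/

import Mathlib

open MeasureTheory

/-- `W₂²(δ_x, ν) = ∫ d²(x,y) dν(y)`, as an extended nonnegative real. -/
noncomputable def w2sq {M : Type*} [MetricSpace M] [MeasurableSpace M]
    (x : M) (ν : Measure M) : ENNReal :=
  ∫⁻ y, ENNReal.ofReal (dist x y ^ 2) ∂ν

/-- The variance of `μ`: the infimum over `y ∈ M` of `∫ d²(x,y) dμ(x)`. -/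
noncomputable def varE {M : Type*} [MetricSpace M] [MeasurableSpace M]
    (μ : Measure M) : ENNReal :=
  ⨅ y : M, ∫⁻ x, ENNReal.ofReal (dist x y ^ 2) ∂μ

/-!
Let `μ` be a variance-maximizing measure on `X` with unique barycenter `y`. Moving a small mass
`t` of `μ` to a point `x₀ ∈ X` cannot increase the variance, and comparing Fréchet functions at a
barycenter `z_t` of the perturbed measure gives `d(x₀, z_t)² ≤ Var μ`. As `t → 0`, the `z_t`
accumulate (by compactness) only at barycenters of `μ`, that is at `y`; hence `X` lies in the
closed ball of radius `√(Var μ)` about `y`. Conversely, for every `ν ∈ P(M)`, Fubini gives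
`Var μ ≤ ∫∫ d²(x, y) dμ(x) dν(y) ≤ sup_{x ∈ X} W₂²(δ_x, ν)`; Dirac masses give the other
inequality.
-/

open Filter Topology Bornology TopologicalSpace

section DiracMix

variable {α : Type*} [MeasurableSpace α] {μ : Measure α}

noncomputable def diracMix (μ : Measure α) (x₀ : α) (t : ℝ) : Measure α :=
  ENNReal.ofReal (1 - t) • μ + ENNReal.ofReal t • Measure.dirac x₀

lemma isProbabilityMeasure_diracMix [IsProbabilityMeasure μ] (x₀ : α) {t : ℝ}
    (ht₀ : 0 ≤ t) (ht₁ : t ≤ 1) : IsProbabilityMeasure (diracMix μ x₀ t) := by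
  constructor
  simp only [diracMix, Measure.add_apply, Measure.smul_apply, measure_univ, smul_eq_mul, mul_one]
  rw [← ENNReal.ofReal_add (by linarith) ht₀]
  norm_num

lemma diracMix_ae_mem {X : Set α} (hXm : MeasurableSet X) (hμX : ∀ᵐ x ∂μ, x ∈ X) {x₀ : α}
    (hx₀ : x₀ ∈ X) (t : ℝ) : ∀ᵐ x ∂diracMix μ x₀ t, x ∈ X := by
  rw [diracMix, ae_add_measure_iff]
  exact ⟨Measure.ae_smul_measure hμX _, Measure.ae_smul_measure ((ae_dirac_iff hXm).2 hx₀) _⟩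

lemma integral_diracMix [MeasurableSingletonClass α] {f : α → ℝ} (hf : Integrable f μ)
    (x₀ : α) {t : ℝ} (ht₀ : 0 ≤ t) (ht₁ : t ≤ 1) :
    ∫ x, f x ∂diracMix μ x₀ t = (1 - t) * ∫ x, f x ∂μ + t * f x₀ := by
  have hfδ : Integrable f (Measure.dirac x₀) := integrable_dirac enorm_lt_top
  rw [diracMix, integral_add_measure (hf.smul_measure ENNReal.ofReal_ne_top)
    (hfδ.smul_measure ENNReal.ofReal_ne_top), integral_smul_measure, integral_smul_measure,
    integral_dirac, ENNReal.toReal_ofReal (by linarith), ENNReal.toReal_ofReal ht₀,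
    smul_eq_mul, smul_eq_mul]

end DiracMix

/-- Without second countability, continuity of `f` need not give measurability on `α × β`;
it does on `X × β` for the separable subtype `X`. -/
lemma lintegral_lintegral_swap_of_ae_mem {α β : Type*} [TopologicalSpace α]
    [PseudoMetrizableSpace α] [MeasurableSpace α] [OpensMeasurableSpace α]
    [TopologicalSpace β] [MeasurableSpace β] [OpensMeasurableSpace β] {X : Set α}
    (hXs : IsSeparable X) (hXm : MeasurableSet X) {μ : Measure α} [IsFiniteMeasure μ]
    (hμX : ∀ᵐ x ∂μ, x ∈ X) {ν : Measure β} [SFinite ν] {f : α → β → ENNReal}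
    (hf : Continuous (Function.uncurry f)) :
    ∫⁻ x, ∫⁻ y, f x y ∂ν ∂μ = ∫⁻ y, ∫⁻ x, f x y ∂μ ∂ν := by
  have := hXs.secondCountableTopology
  have hμ : μ = (μ.comap ((↑) : X → α)).map (↑) := by
    rw [map_comap_subtype_coe hXm, Measure.restrict_eq_self_of_ae_mem hμX]
  have he := MeasurableEmbedding.subtype_coe hXm
  rw [hμ, he.lintegral_map]
  simp_rw [he.lintegral_map]
  exact lintegral_lintegral_swap
    (hf.comp (continuous_subtype_val.prodMap continuous_id)).aemeasurable

section Barycenter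

variable {M : Type*} [MetricSpace M] [MeasurableSpace M]

def IsBarycenter (μ : Measure M) (y : M) : Prop :=
  ∀ z : M, ∫ x, dist x y ^ 2 ∂μ ≤ ∫ x, dist x z ^ 2 ∂μ

variable [BorelSpace M] {X : Set M} {μ : Measure M}

lemma integrable_dist_sq_of_ae_mem (hX : IsBounded X) [IsFiniteMeasure μ]
    (hμX : ∀ᵐ x ∂μ, x ∈ X) (z : M) : Integrable (fun x => dist x z ^ 2) μ := by
  obtain ⟨r, hr⟩ := hX.subset_closedBall z
  refine (integrable_const (r ^ 2)).mono' (by fun_prop) ?_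
  filter_upwards [hμX] with x hx
  rw [Real.norm_of_nonneg (sq_nonneg _)]
  exact pow_le_pow_left₀ dist_nonneg (hr hx) 2

lemma lintegral_ofReal_dist_sq (hX : IsBounded X) [IsFiniteMeasure μ]
    (hμX : ∀ᵐ x ∂μ, x ∈ X) (z : M) :
    ∫⁻ x, ENNReal.ofReal (dist x z ^ 2) ∂μ = ENNReal.ofReal (∫ x, dist x z ^ 2 ∂μ) :=
  (ofReal_integral_eq_lintegral_ofReal (integrable_dist_sq_of_ae_mem hX hμX z)
    (.of_forall fun _ => sq_nonneg _)).symm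

lemma varE_eq_ofReal_integral (hX : IsBounded X) [IsFiniteMeasure μ]
    (hμX : ∀ᵐ x ∂μ, x ∈ X) {y : M} (hy : IsBarycenter μ y) :
    varE μ = ENNReal.ofReal (∫ x, dist x y ^ 2 ∂μ) := by
  refine le_antisymm ((iInf_le _ y).trans (lintegral_ofReal_dist_sq hX hμX y).le) ?_
  refine le_iInf fun z => ?_
  rw [lintegral_ofReal_dist_sq hX hμX z]
  exact ENNReal.ofReal_le_ofReal (hy z)

lemma continuous_integral_dist_sq (hX : IsBounded X) [IsFiniteMeasure μ]
    (hμX : ∀ᵐ x ∂μ, x ∈ X) : Continuous fun z => ∫ x, dist x z ^ 2 ∂μ := by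
  refine continuous_iff_continuousAt.2 fun z₀ => ?_
  obtain ⟨r, hr⟩ := hX.subset_closedBall z₀
  refine continuousAt_of_dominated (bound := fun _ => (r + 1) ^ 2)
    (.of_forall fun _ => by fun_prop) ?_ (integrable_const _) (.of_forall fun _ => by fun_prop)
  filter_upwards [Metric.ball_mem_nhds z₀ one_pos] with z hz
  filter_upwards [hμX] with x hx
  rw [Real.norm_of_nonneg (sq_nonneg _)]
  refine pow_le_pow_left₀ dist_nonneg ?_ 2
  linarith [dist_triangle x z₀ z, Metric.mem_closedBall.1 (hr hx), Metric.mem_ball'.1 hz]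

lemma dist_sq_le_of_isBarycenter_diracMix (hX : IsBounded X) (hXm : MeasurableSet X)
    [IsProbabilityMeasure μ] (hμX : μ Xᶜ = 0)
    (hmax : ∀ μ' : Measure M, IsProbabilityMeasure μ' → μ' Xᶜ = 0 → varE μ' ≤ varE μ)
    {y : M} (hy : IsBarycenter μ y) {x₀ : M} (hx₀ : x₀ ∈ X) {t : ℝ} (ht₀ : 0 < t)
    (ht₁ : t ≤ 1) {z : M} (hz : IsBarycenter (diracMix μ x₀ t) z) :
    dist x₀ z ^ 2 ≤ ∫ x, dist x y ^ 2 ∂μ := by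
  have hρX := diracMix_ae_mem hXm hμX hx₀ t
  have hρ := isProbabilityMeasure_diracMix (μ := μ) x₀ ht₀.le ht₁
  have hvar := hmax _ hρ hρX
  rw [varE_eq_ofReal_integral hX hρX hz, varE_eq_ofReal_integral hX hμX hy,
    ENNReal.ofReal_le_ofReal_iff (integral_nonneg fun _ => sq_nonneg _),
    integral_diracMix (integrable_dist_sq_of_ae_mem hX hμX z) x₀ ht₀.le ht₁] at hvar
  have hyz := hy z
  nlinarith

lemma IsBarycenter.of_tendsto_diracMix (hX : IsBounded X) [IsFiniteMeasure μ]
    (hμX : ∀ᵐ x ∂μ, x ∈ X) (x₀ : M) {t : ℕ → ℝ} (ht : Tendsto t atTop (𝓝 0))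
    (ht₀ : ∀ n, 0 ≤ t n) (ht₁ : ∀ n, t n ≤ 1) {z : ℕ → M} {z₀ : M}
    (hz : ∀ n, IsBarycenter (diracMix μ x₀ (t n)) (z n)) (hlim : Tendsto z atTop (𝓝 z₀)) :
    IsBarycenter μ z₀ := by
  set I := fun w => ∫ x, dist x w ^ 2 ∂μ
  have hmix : ∀ n w, ∫ x, dist x w ^ 2 ∂diracMix μ x₀ (t n)
      = (1 - t n) * I w + t n * dist x₀ w ^ 2 :=
    fun n w => integral_diracMix (integrable_dist_sq_of_ae_mem hX hμX w) x₀ (ht₀ n) (ht₁ n)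
  have hone : Tendsto (fun n => 1 - t n) atTop (𝓝 1) := by
    simpa using (tendsto_const_nhds (x := (1 : ℝ))).sub ht
  have hdist : Continuous fun w => dist x₀ w ^ 2 := by fun_prop
  intro w
  have hlhs : Tendsto (fun n => (1 - t n) * I (z n) + t n * dist x₀ (z n) ^ 2) atTop
      (𝓝 (I z₀)) := by
    simpa using (hone.mul ((continuous_integral_dist_sq hX hμX).tendsto z₀ |>.comp hlim)).add
      (ht.mul (hdist.tendsto z₀ |>.comp hlim))
  have hrhs : Tendsto (fun n => (1 - t n) * I w + t n * dist x₀ w ^ 2) atTop (𝓝 (I w)) := by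
    simpa using (hone.mul_const (I w)).add (ht.mul_const _)
  exact le_of_tendsto_of_tendsto' hlhs hrhs fun n => by simpa only [hmix] using hz n w

lemma dist_sq_le_integral_of_isMaxVariance (hX : IsBounded X) (hXm : MeasurableSet X)
    (hK : IsCompact {y : M | ∃ μ : Measure M, IsProbabilityMeasure μ ∧ μ Xᶜ = 0 ∧
      IsBarycenter μ y})
    (hbary : ∀ μ : Measure M, IsProbabilityMeasure μ → μ Xᶜ = 0 → ∃ y, IsBarycenter μ y)
    [IsProbabilityMeasure μ] (hμX : μ Xᶜ = 0)
    (hmax : ∀ μ' : Measure M, IsProbabilityMeasure μ' → μ' Xᶜ = 0 → varE μ' ≤ varE μ)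
    {y : M} (hy : IsBarycenter μ y) (huy : ∀ z, IsBarycenter μ z → z = y) {x₀ : M}
    (hx₀ : x₀ ∈ X) : dist x₀ y ^ 2 ≤ ∫ x, dist x y ^ 2 ∂μ := by
  set t : ℕ → ℝ := fun n => 1 / (n + 1)
  have ht₀ : ∀ n, 0 < t n := fun n => by positivity
  have ht₁ : ∀ n, t n ≤ 1 := fun n => div_le_one_of_le₀ (by simp) (by positivity)
  have hρ n := isProbabilityMeasure_diracMix (μ := μ) x₀ (ht₀ n).le (ht₁ n)
  have hρX n := diracMix_ae_mem hXm hμX hx₀ (t n)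
  choose z hz using fun n => hbary _ (hρ n) (hρX n)
  obtain ⟨z₀, -, φ, hφ, hlim⟩ := hK.tendsto_subseq fun n => ⟨_, hρ n, hρX n, hz n⟩
  obtain rfl : z₀ = y := huy z₀ <| .of_tendsto_diracMix hX hμX x₀
    (tendsto_one_div_add_atTop_nhds_zero_nat.comp hφ.tendsto_atTop) (fun _ => (ht₀ _).le)
    (fun _ => ht₁ _) (fun n => hz (φ n)) hlim
  refine le_of_tendsto ((continuous_const.dist continuous_id).pow 2 |>.tendsto z₀ |>.comp hlim)
    (.of_forall fun n => ?_)
  exact dist_sq_le_of_isBarycenter_diracMix hX hXm hμX hmax hy hx₀ (ht₀ _) (ht₁ _) (hz (φ n))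

end Barycenter

section Wasserstein

variable {M : Type*} [MetricSpace M] [MeasurableSpace M] [BorelSpace M]

lemma varE_le_iSup_w2sq {X : Set M} (hXs : IsSeparable X) (hXm : MeasurableSet X)
    {μ : Measure M} [IsProbabilityMeasure μ] (hμX : ∀ᵐ x ∂μ, x ∈ X) (ν : Measure M)
    [IsProbabilityMeasure ν] : varE μ ≤ ⨆ x ∈ X, w2sq x ν :=
  calc varE μ = ∫⁻ _, varE μ ∂ν := by simp
    _ ≤ ∫⁻ y, ∫⁻ x, ENNReal.ofReal (dist x y ^ 2) ∂μ ∂ν := lintegral_mono fun y => iInf_le _ y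
    _ = ∫⁻ x, w2sq x ν ∂μ :=
      (lintegral_lintegral_swap_of_ae_mem hXs hXm hμX
        (f := fun x y => ENNReal.ofReal (dist x y ^ 2))
        (ENNReal.continuous_ofReal.comp (by fun_prop))).symm
    _ ≤ ∫⁻ _, ⨆ x ∈ X, w2sq x ν ∂μ :=
      lintegral_mono_ae (hμX.mono fun x hx => le_biSup (w2sq · ν) hx)
    _ = ⨆ x ∈ X, w2sq x ν := by simp

lemma w2sq_dirac_rpow_half (x y : M) :
    w2sq x (Measure.dirac y) ^ (1 / 2 : ℝ) = ENNReal.ofReal (dist x y) := by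
  rw [w2sq, lintegral_dirac, ENNReal.ofReal_rpow_of_nonneg (sq_nonneg _) (by norm_num),
    ← Real.sqrt_eq_rpow, Real.sqrt_sq dist_nonneg]

lemma wassersteinCircumradius_le_circumradius (X : Set M) :
    ⨅ ν : {ν : Measure M // IsProbabilityMeasure ν}, ⨆ x ∈ X, w2sq x ν.1 ^ (1 / 2 : ℝ) ≤
      ⨅ y : M, ⨆ x ∈ X, ENNReal.ofReal (dist x y) :=
  le_iInf fun y => iInf_le_of_le ⟨Measure.dirac y, inferInstance⟩ <| by
    simp only [w2sq_dirac_rpow_half, le_refl]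

end Wasserstein

theorem circumradius_eq_wassersteinCircumradius_general {M : Type*}
    [MetricSpace M] [MeasurableSpace M] [BorelSpace M]
    (X : Set M) (hX : IsCompact X)
    (hconv : IsCompact {y : M | ∃ μ : Measure M, IsProbabilityMeasure μ ∧ μ Xᶜ = 0 ∧
      ∀ z : M, (∫ x, dist x y ^ 2 ∂μ) ≤ ∫ x, dist x z ^ 2 ∂μ})
    (hbary : ∀ μ : Measure M, IsProbabilityMeasure μ → μ Xᶜ = 0 →
      ∃ y : M, ∀ z : M, (∫ x, dist x y ^ 2 ∂μ) ≤ ∫ x, dist x z ^ 2 ∂μ)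
    -- some variance maximizing measure has a unique barycenter:
    (huniq : ∃ μ : Measure M, IsProbabilityMeasure μ ∧ μ Xᶜ = 0 ∧
      (∀ μ' : Measure M, IsProbabilityMeasure μ' → μ' Xᶜ = 0 → varE μ' ≤ varE μ) ∧
      (∃! y : M, ∀ z : M, (∫ x, dist x y ^ 2 ∂μ) ≤ ∫ x, dist x z ^ 2 ∂μ)) :
    (⨅ y : M, ⨆ x ∈ X, ENNReal.ofReal (dist x y)) =
      ⨅ ν : {ν : Measure M // IsProbabilityMeasure ν}, ⨆ x ∈ X, w2sq x ν.1 ^ (1/2 : ℝ) := by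
  obtain ⟨μ, hμ, hμX, hmax, y, hy, huy⟩ := huniq
  have hXm := hX.isClosed.measurableSet
  refine le_antisymm (le_iInf fun ν => ?_) (wassersteinCircumradius_le_circumradius X)
  have := ν.2
  have hradius : ∀ x ∈ X, ENNReal.ofReal (dist x y) ≤ varE μ ^ (1 / 2 : ℝ) := fun x hx => by
    rw [varE_eq_ofReal_integral hX.isBounded hμX hy, ENNReal.ofReal_rpow_of_nonneg
      (integral_nonneg fun _ => sq_nonneg _) (by norm_num), ← Real.sqrt_eq_rpow]
    exact ENNReal.ofReal_le_ofReal <| Real.le_sqrt_of_sq_le <|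
      dist_sq_le_integral_of_isMaxVariance hX.isBounded hXm hconv hbary hμX hmax hy huy hx
  calc ⨅ y, ⨆ x ∈ X, ENNReal.ofReal (dist x y)
      ≤ ⨆ x ∈ X, ENNReal.ofReal (dist x y) := iInf_le _ y
    _ ≤ varE μ ^ (1 / 2 : ℝ) := iSup₂_le hradius
    _ ≤ (⨆ x ∈ X, w2sq x ν.1) ^ (1 / 2 : ℝ) :=
      ENNReal.rpow_le_rpow (varE_le_iSup_w2sq hX.isSeparable hXm hμX ν.1) (by norm_num)
    _ = ⨆ x ∈ X, w2sq x ν.1 ^ (1 / 2 : ℝ) := (ENNReal.orderIsoRpow _ (by norm_num)).map_iSup₂ _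

/-- If some variance-maximizing measure on `X` has a unique barycenter, the circumradius
of `X` in `M` equals the circumradius of `i(X) = {δ_x : x ∈ X}` in `(P(M), W₂)`. -/
theorem circumradius_eq_wassersteinCircumradius {M : Type*}
    [MetricSpace M] [CompleteSpace M] [MeasurableSpace M] [BorelSpace M]
    (X : Set M) (hX : IsCompact X) (hXne : X.Nonempty)
    (hconv : IsCompact {y : M | ∃ μ : Measure M, IsProbabilityMeasure μ ∧ μ Xᶜ = 0 ∧
      ∀ z : M, (∫ x, dist x y ^ 2 ∂μ) ≤ ∫ x, dist x z ^ 2 ∂μ})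
    (hbary : ∀ μ : Measure M, IsProbabilityMeasure μ → μ Xᶜ = 0 →
      ∃ y : M, ∀ z : M, (∫ x, dist x y ^ 2 ∂μ) ≤ ∫ x, dist x z ^ 2 ∂μ)
    -- some variance maximizing measure has a unique barycenter:
    (huniq : ∃ μ : Measure M, IsProbabilityMeasure μ ∧ μ Xᶜ = 0 ∧
      (∀ μ' : Measure M, IsProbabilityMeasure μ' → μ' Xᶜ = 0 → varE μ' ≤ varE μ) ∧
      (∃! y : M, ∀ z : M, (∫ x, dist x y ^ 2 ∂μ) ≤ ∫ x, dist x z ^ 2 ∂μ)) :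
    (⨅ y : M, ⨆ x ∈ X, ENNReal.ofReal (dist x y)) =
      ⨅ ν : {ν : Measure M // IsProbabilityMeasure ν}, ⨆ x ∈ X, w2sq x ν.1 ^ (1/2 : ℝ) :=
  circumradius_eq_wassersteinCircumradius_general X hX hconv hbary huniq
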